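/- The single-cluster score function Score_γ has sensitivity at most 1 and range [0, |D_c|]. Precisely, let γ_Int, γ_Suf ≥ 0 with γ_Int + γ_Suf = 1, and define Score_γ(D, f, c, A) = γ_Int·Int_p(D, f, c, A) + γ_Suf·Suf_p(D, f, c, A). Then: (a) for every clustering function f, label c, attribute A, dataset D and tuple t, writing D' = D + {t}, |Score_γ(D', f, c, A) − Score_γ(D, f, c, A)| ≤ 1; and (b) 0 ≤ Score_γ(D, f, c, A) ≤ |D_c|. -/

import Mathlib

noncomputable section

/-- The cluster of label `c`: the sub-multiset of tuples of `D` mapped to `c` by `f`. -/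
def cl {T C : Type*} [DecidableEq C] (D : Multiset T) (f : T → C) (c : C) : Multiset T :=
  D.filter (fun t => f t = c)

/-- Low-sensitivity interestingness. -/
def Intp {T V C : Type*} [Fintype V] [DecidableEq V] [DecidableEq C]
    (D : Multiset T) (f : T → C) (c : C) (A : T → V) : ℝ :=
  (1 / 2) * ∑ a : V,
    |(((cl D f c).map A).count a : ℝ) -
      ((Multiset.card (cl D f c) : ℝ) / (Multiset.card D : ℝ)) * ((D.map A).count a : ℝ)|

/-- Low-sensitivity sufficiency. -/
def Sufp {T V C : Type*} [Fintype V] [DecidableEq V] [DecidableEq C]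
    (D : Multiset T) (f : T → C) (c : C) (A : T → V) : ℝ :=
  ∑ a : V,
    if 0 < ((cl D f c).map A).count a then
      ((((cl D f c).map A).count a : ℝ)) ^ 2 / (((D.map A).count a : ℝ))
    else 0

/-- The single-cluster score
`Score_γ(D, f, c, A) = γ_Int·Int_p(D, f, c, A) + γ_Suf·Suf_p(D, f, c, A)`. -/
def Score {T V C : Type*} [Fintype V] [DecidableEq V] [DecidableEq C]
    (gInt gSuf : ℝ) (D : Multiset T) (f : T → C) (c : C) (A : T → V) : ℝ :=
  gInt * Intp D f c A + gSuf * Sufp D f c A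

/-! Both `Intp` and `Sufp` are sums over attribute values of the counts `k a` (in the cluster)
and `n a` (in `D`). Adding `t` raises `n (A t)` and `|D|` by one, and `k (A t)` and `|D_c|` by the
same `e ∈ {0, 1}`. Only one summand of `Sufp` moves, and `|(k + e)² / (n + 1) - k² / n| ≤ 1`.
For `Intp` the summands are `|k a - r * n a|` with `r = |D_c| / |D|`; the change of the deviation
vector is `(e - r') • δ_{A t} + (r - r') • n`, of `ℓ¹`-norm at most `|e - r'| + |r - r'| |D|`,
which equals `2 |e - r'| ≤ 2`. The range bounds come from `k² / n ≤ k` and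
`|k - r n| ≤ k + r n`, and `Score` inherits everything by convexity. -/

open Finset

section Cluster

variable {T C : Type*} [DecidableEq C] (f : T → C) (c : C)

lemma cl_le (D : Multiset T) : cl D f c ≤ D :=
  Multiset.filter_le _ _

lemma card_cl_le (D : Multiset T) : Multiset.card (cl D f c) ≤ Multiset.card D :=
  Multiset.card_le_card (cl_le f c D)

variable {f c} in
lemma cl_cons_of_pos {t : T} (h : f t = c) (D : Multiset T) : cl (t ::ₘ D) f c = t ::ₘ cl D f c :=
  Multiset.filter_cons_of_pos _ h

variable {f c} in
lemma cl_cons_of_neg {t : T} (h : ¬f t = c) (D : Multiset T) : cl (t ::ₘ D) f c = cl D f c :=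
  Multiset.filter_cons_of_neg _ h

end Cluster

section Counts

variable {T V C : Type*} [DecidableEq V] [DecidableEq C] (f : T → C) (c : C) (A : T → V)

lemma count_map_cl_le (D : Multiset T) (a : V) :
    ((cl D f c).map A).count a ≤ (D.map A).count a :=
  Multiset.count_le_of_le _ (Multiset.map_le_map (cl_le f c D))

lemma count_map_cons_cast (D : Multiset T) (t : T) (a : V) :
    (((t ::ₘ D).map A).count a : ℝ) = (D.map A).count a + if a = A t then 1 else 0 := by
  rw [Multiset.map_cons, Multiset.count_cons]
  push_cast
  rfl

/-- Adding `t` adds `e = 1` to the cluster if `f t = c` and `e = 0` otherwise. -/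
lemma exists_cl_cons_cast (D : Multiset T) (t : T) :
    ∃ e : ℝ, 0 ≤ e ∧ e ≤ 1 ∧
      (Multiset.card (cl (t ::ₘ D) f c) : ℝ) = Multiset.card (cl D f c) + e ∧
      ∀ a, (((cl (t ::ₘ D) f c).map A).count a : ℝ) =
        ((cl D f c).map A).count a + if a = A t then e else 0 := by
  by_cases hft : f t = c
  · refine ⟨1, zero_le_one, le_rfl, ?_, fun a => ?_⟩
    · rw [cl_cons_of_pos hft, Multiset.card_cons, Nat.cast_succ]
    · rw [cl_cons_of_pos hft, count_map_cons_cast]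
  · refine ⟨0, le_rfl, zero_le_one, ?_, fun a => ?_⟩
    · rw [cl_cons_of_neg hft, add_zero]
    · rw [cl_cons_of_neg hft, ite_self, add_zero]

end Counts

lemma Multiset.sum_univ_count_cast {V : Type*} [Fintype V] [DecidableEq V] (s : Multiset V) :
    ∑ a : V, (s.count a : ℝ) = Multiset.card s := by
  exact_mod_cast Multiset.sum_count_eq_card fun a _ => mem_univ a

lemma abs_sum_abs_sub_sum_abs_le {ι : Type*} (s : Finset ι) (u v : ι → ℝ) :
    |(∑ i ∈ s, |u i|) - (∑ i ∈ s, |v i|)| ≤ ∑ i ∈ s, |u i - v i| := by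
  rw [← sum_sub_distrib]
  exact (abs_sum_le_sum_abs _ _).trans (sum_le_sum fun i _ => abs_abs_sub_abs_le_abs_sub _ _)

lemma sq_div_le_self {k n : ℝ} (hk : 0 ≤ k) (hkn : k ≤ n) : k ^ 2 / n ≤ k := by
  rcases hk.eq_or_lt with rfl | hk
  · simp
  · rw [div_le_iff₀ (hk.trans_le hkn)]
    nlinarith

lemma abs_add_sq_div_add_one_sub_sq_div_le_one {k n e : ℝ} (hk : 0 ≤ k) (hkn : k ≤ n)
    (he0 : 0 ≤ e) (he1 : e ≤ 1) : |(k + e) ^ 2 / (n + 1) - k ^ 2 / n| ≤ 1 := by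
  rcases (hk.trans hkn).eq_or_lt with rfl | hn
  · obtain rfl : k = 0 := le_antisymm hkn hk
    norm_num [abs_of_nonneg he0, he1]
  · have hn1 : 0 < n + 1 := by linarith
    rw [div_sub_div _ _ hn1.ne' hn.ne', abs_div, abs_of_pos (mul_pos hn1 hn),
      div_le_one (mul_pos hn1 hn), abs_le]
    constructor <;> nlinarith [sq_nonneg (n - k), mul_nonneg hk he0, mul_nonneg hk hn.le,
      mul_nonneg (mul_nonneg hk hn.le) (sub_nonneg.2 he1), mul_nonneg he0 (sub_nonneg.2 he1)]

/-- Writing `r = m / N` and `r' = (m + e) / (N + 1)`, the identities `r * N = m` and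
`r' * (N + 1) = m + e` turn the second summand into `|r' - e|`, and `e, r' ∈ [0, 1]`. -/
lemma abs_sub_div_add_abs_div_sub_div_mul_le_two {m N e : ℝ} (hm : 0 ≤ m) (hmN : m ≤ N)
    (he0 : 0 ≤ e) (he1 : e ≤ 1) :
    |e - (m + e) / (N + 1)| + |m / N - (m + e) / (N + 1)| * N ≤ 2 := by
  set r' := (m + e) / (N + 1)
  have hN1 : 0 < N + 1 := by linarith
  have hr' : r' * (N + 1) = m + e := div_mul_cancel₀ _ hN1.ne'
  have hr : m / N * N = m := div_mul_cancel_of_imp fun hN => by linarith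
  have hr'0 : 0 ≤ r' := by positivity
  have hr'1 : r' ≤ 1 := (div_le_one hN1).2 (by linarith)
  have hsecond : |m / N - r'| * N = |e - r'| := by
    rw [← abs_of_nonneg (hm.trans hmN), ← abs_mul, abs_of_nonneg (hm.trans hmN), sub_mul, hr,
      ← abs_neg]
    congr 1
    linarith
  have hfirst : |e - r'| ≤ 1 := abs_sub_le_of_nonneg_of_le he0 he1 hr'0 hr'1
  linarith

lemma abs_sum_abs_deviation_update_sub_le_two {V : Type*} [Fintype V] [DecidableEq V]
    (k n : V → ℝ) (b : V) {m N e : ℝ} (hn : ∀ a, 0 ≤ n a) (hN : ∑ a, n a = N) (hm : 0 ≤ m)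
    (hmN : m ≤ N) (he0 : 0 ≤ e) (he1 : e ≤ 1) :
    |(∑ a, |k a + (if a = b then e else 0) - (m + e) / (N + 1) * (n a + if a = b then 1 else 0)|)
      - (∑ a, |k a - m / N * n a|)| ≤ 2 := by
  set r' := (m + e) / (N + 1)
  refine (abs_sum_abs_sub_sum_abs_le _ _ _).trans ?_
  calc ∑ a, |k a + (if a = b then e else 0) - r' * (n a + if a = b then 1 else 0)
          - (k a - m / N * n a)|
      ≤ ∑ a, (|if a = b then e - r' else 0| + |m / N - r'| * n a) := by
        refine sum_le_sum fun a _ => ?_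
        rw [← abs_of_nonneg (hn a), ← abs_mul, abs_of_nonneg (hn a)]
        refine (abs_add_le _ _).trans_eq' ?_
        congr 1
        split_ifs <;> ring
    _ = |e - r'| + |m / N - r'| * N := by
        rw [sum_add_distrib, ← mul_sum, hN]
        simp [apply_ite (abs : ℝ → ℝ)]
    _ ≤ 2 := abs_sub_div_add_abs_div_sub_div_mul_le_two hm hmN he0 he1

section Scores

variable {T V C : Type*} [Fintype V] [DecidableEq V] [DecidableEq C] (f : T → C) (c : C)
  (A : T → V)

lemma Intp_mem_Icc (D : Multiset T) :
    Intp D f c A ∈ Set.Icc 0 (Multiset.card (cl D f c) : ℝ) := by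
  have hrN : (Multiset.card (cl D f c) : ℝ) / Multiset.card D * Multiset.card D
      = Multiset.card (cl D f c) := div_mul_cancel_of_imp fun hD => by
    have hle := card_cl_le f c D
    have hD' : Multiset.card D = 0 := by exact_mod_cast hD
    exact_mod_cast (by omega : Multiset.card (cl D f c) = 0)
  refine ⟨by unfold Intp; positivity, ?_⟩
  calc Intp D f c A
      ≤ 1 / 2 * ∑ a : V, ((((cl D f c).map A).count a : ℝ) +
          (Multiset.card (cl D f c) : ℝ) / Multiset.card D * (D.map A).count a) := by
        unfold Intp
        gcongr with a
        exact (abs_sub _ _).trans_eq (by rw [abs_of_nonneg (by positivity),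
          abs_of_nonneg (by positivity)])
    _ = Multiset.card (cl D f c) := by
        rw [sum_add_distrib, ← mul_sum, Multiset.sum_univ_count_cast, Multiset.sum_univ_count_cast,
          Multiset.card_map, Multiset.card_map, hrN]
        ring

lemma abs_Intp_cons_sub_le_one (D : Multiset T) (t : T) :
    |Intp (t ::ₘ D) f c A - Intp D f c A| ≤ 1 := by
  obtain ⟨e, he0, he1, hm, hk⟩ := exists_cl_cons_cast f c A D t
  have hdev := abs_sum_abs_deviation_update_sub_le_two (fun a => ((cl D f c).map A).count a)
    (fun a => (D.map A).count a) (A t) (fun a => Nat.cast_nonneg _)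
    (by rw [Multiset.sum_univ_count_cast, Multiset.card_map]) (Nat.cast_nonneg _)
    (by exact_mod_cast card_cl_le f c D) he0 he1
  simp only [Intp, hm, hk, count_map_cons_cast, Multiset.card_cons, Nat.cast_succ]
  rw [← mul_sub, abs_mul, abs_of_pos one_half_pos]
  linarith

lemma Sufp_eq_sum_sq_div (D : Multiset T) :
    Sufp D f c A = ∑ a : V, (((cl D f c).map A).count a : ℝ) ^ 2 / (D.map A).count a := by
  refine sum_congr rfl fun a _ => ?_
  split_ifs with h
  · rfl
  · rw [Nat.eq_zero_of_not_pos h, Nat.cast_zero, zero_pow two_ne_zero, zero_div]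

lemma Sufp_mem_Icc (D : Multiset T) :
    Sufp D f c A ∈ Set.Icc 0 (Multiset.card (cl D f c) : ℝ) := by
  rw [Sufp_eq_sum_sq_div]
  refine ⟨by positivity, ?_⟩
  calc ∑ a : V, (((cl D f c).map A).count a : ℝ) ^ 2 / (D.map A).count a
      ≤ ∑ a : V, (((cl D f c).map A).count a : ℝ) :=
        sum_le_sum fun a _ => sq_div_le_self (Nat.cast_nonneg _)
          (by exact_mod_cast count_map_cl_le f c A D a)
    _ = Multiset.card (cl D f c) := by
        rw [Multiset.sum_univ_count_cast, Multiset.card_map]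

lemma abs_Sufp_cons_sub_le_one (D : Multiset T) (t : T) :
    |Sufp (t ::ₘ D) f c A - Sufp D f c A| ≤ 1 := by
  obtain ⟨e, he0, he1, -, hk⟩ := exists_cl_cons_cast f c A D t
  rw [Sufp_eq_sum_sq_div, Sufp_eq_sum_sq_div, ← sum_sub_distrib,
    sum_eq_single_of_mem (A t) (mem_univ _)]
  · rw [hk, count_map_cons_cast, if_pos rfl, if_pos rfl]
    exact abs_add_sq_div_add_one_sub_sq_div_le_one (Nat.cast_nonneg _)
      (by exact_mod_cast count_map_cl_le f c A D (A t)) he0 he1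
  · intro a _ ha
    rw [hk, count_map_cons_cast, if_neg ha, if_neg ha, add_zero, add_zero, sub_self]

end Scores

/-- The single-cluster score `Score_γ` has sensitivity at most `1` and range
`[0, |D_c|]`, for nonnegative weights `γ_Int + γ_Suf = 1`. -/
theorem score_sensitivity_and_range {T V C : Type*} [Fintype V] [DecidableEq V] [DecidableEq C]
    (gInt gSuf : ℝ) (hInt : 0 ≤ gInt) (hSuf : 0 ≤ gSuf) (hsum : gInt + gSuf = 1)
    (f : T → C) (c : C) (A : T → V) :
    (∀ (D : Multiset T) (t : T),
      |Score gInt gSuf (t ::ₘ D) f c A - Score gInt gSuf D f c A| ≤ 1) ∧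
    (∀ D : Multiset T,
      0 ≤ Score gInt gSuf D f c A ∧
      Score gInt gSuf D f c A ≤ (Multiset.card (cl D f c) : ℝ)) := by
  refine ⟨fun D t => ?_, fun D => ?_⟩
  · have hdiff : Score gInt gSuf (t ::ₘ D) f c A - Score gInt gSuf D f c A
        = gInt • (Intp (t ::ₘ D) f c A - Intp D f c A)
          + gSuf • (Sufp (t ::ₘ D) f c A - Sufp D f c A) := by
      simp only [Score, smul_eq_mul]
      ring
    rw [hdiff, abs_le]
    exact convex_Icc (-1) 1 (abs_le.1 (abs_Intp_cons_sub_le_one f c A D t))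
      (abs_le.1 (abs_Sufp_cons_sub_le_one f c A D t)) hInt hSuf hsum
  · exact convex_Icc _ _ (Intp_mem_Icc f c A D) (Sufp_mem_Icc f c A D) hInt hSuf hsum
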